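/- Let K ≥ 1 and λ > 0. Let f = h + conj(g) be a sense-preserving K-quasiregular harmonic mapping on the unit disc 𝔻 with f(0) = 0, λ_f(0) = 1, and λ_f(z) ≤ λ for all z ∈ 𝔻. Set ρ₁ = 1/(1 + Kλ). Then f is injective on the disc 𝔻_{ρ₁}, and f(𝔻_{ρ₁}) contains the disc of radius R₁ = ρ₁ + Kλ(ρ₁ + ln(Kλ ρ₁)) centered at the origin. -/

import Mathlib

/-!
Write `f = L + F`, where `L v = h'(0) v + conj (g'(0) v)` is the real differential of `f` at `0`.
Cauchy's estimates, applied to `h' + α g'` for a unimodular `α` aligning the two increments, turn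
`|h'| + |g'| ≤ Kλ =: M` into `|h'(w) - h'(0)| + |g'(w) - g'(0)| ≤ M|w| / (1 - |w|)`, which
bounds the differential of `F`. Since `|L v| ≥ |v|`, the mean value inequality on a disc
`|z| ≤ r < ρ₁` (where `M r / (1 - r) < 1`) gives injectivity, and integrating the bound along rays
gives `|f z| ≥ ρ + M (ρ + log (1 - ρ))` on `|z| = ρ`. As `|g'| < |h'|`, `f` is open, so a
connectedness argument turns this estimate at `ρ = ρ₁` into the covering statement; note
`M ρ₁ = 1 - ρ₁`.
-/

open Complex ComplexConjugate Metric Set Filter Topology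
open scoped Nat

section CauchyEstimate

variable {E : Type*} [NormedAddCommGroup E] [NormedSpace ℂ E] [CompleteSpace E]

lemma norm_iteratedDeriv_le_of_forall_mem_ball_norm_le {f : ℂ → E} {c : ℂ} {R M : ℝ} (n : ℕ)
    (hR : 0 < R) (hf : DifferentiableOn ℂ f (ball c R)) (hM : ∀ w ∈ ball c R, ‖f w‖ ≤ M) :
    ‖iteratedDeriv n f c‖ ≤ n ! * M / R ^ n := by
  have hcont : ContinuousAt (fun r : ℝ => n ! * M / r ^ n) R :=
    continuousAt_const.div (continuousAt_id.pow n) (pow_ne_zero n hR.ne')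
  refine ge_of_tendsto (hcont.tendsto.mono_left (nhdsWithin_le_nhds (s := Iio R))) ?_
  filter_upwards [Ioo_mem_nhdsLT hR] with r ⟨hr0, hrR⟩
  refine norm_iteratedDeriv_le_of_forall_mem_sphere_norm_le n hr0
    (hf.diffContOnCl_ball (closedBall_subset_ball hrR)) fun w hw => hM w ?_
  exact sphere_subset_closedBall.trans (closedBall_subset_ball hrR) hw

lemma norm_sub_le_of_forall_mem_ball_norm_le {f : ℂ → E} {M : ℝ} {z : ℂ}
    (hf : DifferentiableOn ℂ f (ball 0 1)) (hM : ∀ w ∈ ball 0 1, ‖f w‖ ≤ M)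
    (hz : z ∈ ball 0 1) : ‖f z - f 0‖ ≤ M * ‖z‖ / (1 - ‖z‖) := by
  have htaylor := Complex.hasSum_taylorSeries_on_ball hf hz
  rw [sub_zero] at htaylor
  have htail : HasSum (fun n : ℕ => ((n + 1)! : ℂ)⁻¹ • z ^ (n + 1) • iteratedDeriv (n + 1) f 0)
      (f z - f 0) := by
    simpa using (hasSum_nat_add_iff' 1).2 htaylor
  have hgeom := (hasSum_geometric_of_lt_one (norm_nonneg z) (mem_ball_zero_iff.1 hz)).mul_left
    (M * ‖z‖)
  rw [div_eq_mul_inv]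
  refine htail.norm_le_of_bounded hgeom fun n => ?_
  have hcoeff := norm_iteratedDeriv_le_of_forall_mem_ball_norm_le (n + 1) one_pos hf hM
  rw [one_pow, div_one] at hcoeff
  rw [norm_smul, norm_smul, norm_inv, Complex.norm_natCast, norm_pow]
  calc ((n + 1)! : ℝ)⁻¹ * (‖z‖ ^ (n + 1) * ‖iteratedDeriv (n + 1) f 0‖)
      ≤ ((n + 1)! : ℝ)⁻¹ * (‖z‖ ^ (n + 1) * ((n + 1)! * M)) := by gcongr
    _ = M * ‖z‖ * ‖z‖ ^ n := by field_simp; ring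

end CauchyEstimate

lemma Complex.exists_norm_eq_one_norm_add_mul_eq (u v : ℂ) :
    ∃ α : ℂ, ‖α‖ = 1 ∧ ‖u + α * v‖ = ‖u‖ + ‖v‖ := by
  rcases eq_or_ne u 0 with rfl | hu
  · exact ⟨1, by simp⟩
  rcases eq_or_ne v 0 with rfl | hv
  · exact ⟨1, by simp⟩
  refine ⟨u * ‖v‖ / (‖u‖ * v), by simp [hu, hv], ?_⟩
  have hαv : u * ‖v‖ / (‖u‖ * v) * v = (‖v‖ / ‖u‖ : ℝ) • u := by
    rw [Complex.real_smul]; push_cast; field_simp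
  rw [hαv, (SameRay.sameRay_nonneg_smul_right u (by positivity)).norm_add, norm_smul,
    Real.norm_of_nonneg (by positivity), div_mul_cancel₀ _ (norm_ne_zero_iff.2 hu)]

lemma norm_sub_add_norm_sub_le {f g : ℂ → ℂ} {M : ℝ} {z : ℂ}
    (hf : DifferentiableOn ℂ f (ball 0 1)) (hg : DifferentiableOn ℂ g (ball 0 1))
    (hM : ∀ w ∈ ball 0 1, ‖f w‖ + ‖g w‖ ≤ M) (hz : z ∈ ball 0 1) :
    ‖f z - f 0‖ + ‖g z - g 0‖ ≤ M * ‖z‖ / (1 - ‖z‖) := by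
  obtain ⟨α, hα, hsum⟩ := exists_norm_eq_one_norm_add_mul_eq (f z - f 0) (g z - g 0)
  have hbound : ∀ w ∈ ball (0 : ℂ) 1, ‖f w + α * g w‖ ≤ M := fun w hw =>
    (norm_add_le _ _).trans (by rw [norm_mul, hα, one_mul]; exact hM w hw)
  rw [← hsum, show f z - f 0 + α * (g z - g 0) = (f z + α * g z) - (f 0 + α * g 0) by ring]
  exact norm_sub_le_of_forall_mem_ball_norm_le (f := fun w => f w + α * g w)
    (hf.add (hg.const_mul α)) hbound hz

section MeanValue

variable {E G : Type*} [NormedAddCommGroup E] [NormedSpace ℝ E] [NormedAddCommGroup G]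
  [NormedSpace ℝ G] {F : E → G} {F' : E → E →L[ℝ] G} {M : ℝ}

lemma norm_image_sub_le_of_norm_fderiv_le_mul_div (hM : 0 ≤ M)
    (hF : ∀ w ∈ ball (0 : E) 1, HasFDerivAt F (F' w) w)
    (hF' : ∀ w ∈ ball (0 : E) 1, ‖F' w‖ ≤ M * ‖w‖ / (1 - ‖w‖))
    {r : ℝ} (hr : r < 1) {x y : E} (hx : x ∈ closedBall 0 r) (hy : y ∈ closedBall 0 r) :
    ‖F y - F x‖ ≤ M * r / (1 - r) * ‖y - x‖ := by
  have hsub : closedBall (0 : E) r ⊆ ball 0 1 := closedBall_subset_ball hr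
  refine (convex_closedBall 0 r).norm_image_sub_le_of_norm_hasFDerivWithin_le
    (fun w hw => (hF w (hsub hw)).hasFDerivWithinAt) (fun w hw => ?_) hx hy
  have hwr : ‖w‖ ≤ r := mem_closedBall_zero_iff.1 hw
  calc ‖F' w‖ ≤ M * ‖w‖ / (1 - ‖w‖) := hF' w (hsub hw)
    _ ≤ M * r / (1 - r) := by
      gcongr
      exact mul_nonneg hM ((norm_nonneg w).trans hwr)

lemma norm_image_sub_image_zero_le_of_norm_fderiv_le_mul_div
    (hF : ∀ w ∈ ball (0 : E) 1, HasFDerivAt F (F' w) w)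
    (hF' : ∀ w ∈ ball (0 : E) 1, ‖F' w‖ ≤ M * ‖w‖ / (1 - ‖w‖)) {z : E} (hz : ‖z‖ < 1) :
    ‖F z - F 0‖ ≤ -M * (‖z‖ + Real.log (1 - ‖z‖)) := by
  -- `B t` is the integral of the radial bound `M s ‖z‖ / (1 - s ‖z‖) * ‖z‖` over `s ∈ [0, t]`.
  set B : ℝ → ℝ := fun t => -M * (t * ‖z‖ + Real.log (1 - t * ‖z‖))
  have hpos : ∀ t ∈ Icc (0 : ℝ) 1, 0 < 1 - t * ‖z‖ := fun t ht => by
    nlinarith [norm_nonneg z, ht.1, ht.2]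
  have hnorm : ∀ t ∈ Icc (0 : ℝ) 1, ‖t • z‖ = t * ‖z‖ := fun t ht => by
    rw [norm_smul, Real.norm_of_nonneg ht.1]
  have hmem : ∀ t ∈ Icc (0 : ℝ) 1, t • z ∈ ball (0 : E) 1 := fun t ht => by
    rw [mem_ball_zero_iff, hnorm t ht]; linarith [hpos t ht]
  have hray : ∀ t ∈ Icc (0 : ℝ) 1,
      HasDerivAt (fun s : ℝ => F (s • z) - F 0) (F' (t • z) z) t := fun t ht => by
    simpa using ((hF _ (hmem t ht)).comp_hasDerivAt t ((hasDerivAt_id t).smul_const z)).sub_const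
      (F 0)
  have hB : ∀ t ∈ Icc (0 : ℝ) 1, HasDerivAt B (M * (t * ‖z‖) / (1 - t * ‖z‖) * ‖z‖) t :=
    fun t ht => by
    have hne := (hpos t ht).ne'
    have hlog := (((hasDerivAt_id t).mul_const ‖z‖).const_sub 1).log hne
    refine ((((hasDerivAt_id t).mul_const ‖z‖).add hlog).const_mul (-M)).congr_deriv ?_
    simp only [id]
    symm
    field_simp
    ring
  have hbound : ∀ t ∈ Ico (0 : ℝ) 1, ‖F' (t • z) z‖ ≤ M * (t * ‖z‖) / (1 - t * ‖z‖) * ‖z‖ :=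
    fun t ht => by
    rw [← hnorm t (Ico_subset_Icc_self ht)]
    exact (F' _).le_of_opNorm_le (hF' _ (hmem t (Ico_subset_Icc_self ht))) z
  simpa [B] using image_norm_le_of_norm_deriv_right_le_deriv_boundary'
    (f := fun s : ℝ => F (s • z) - F 0)
    (fun t ht => (hray t ht).continuousAt.continuousWithinAt)
    (fun t ht => (hray t (Ico_subset_Icc_self ht)).hasDerivWithinAt)
    (by simp [B]) (fun t ht => (hB t ht).continuousAt.continuousWithinAt)
    (fun t ht => (hB t (Ico_subset_Icc_self ht)).hasDerivWithinAt) hbound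
    (right_mem_Icc.2 zero_le_one)

end MeanValue

lemma ball_subset_image_ball_of_le_dist_sphere {E F : Type*} [MetricSpace E] [ProperSpace E]
    [NormedAddCommGroup F] [NormedSpace ℝ F] {f : E → F} {c : E} {r R : ℝ} (hr : 0 < r)
    (hcont : ContinuousOn f (closedBall c r)) (hopen : IsOpen (f '' ball c r))
    (hsphere : ∀ z ∈ sphere c r, R ≤ dist (f z) (f c)) :
    ball (f c) R ⊆ f '' ball c r := by
  intro w hw
  have hclosed : IsClosed (f '' closedBall c r) :=
    ((isCompact_closedBall c r).image_of_continuousOn hcont).isClosed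
  have hcover : ball (f c) R ⊆ f '' ball c r ∪ (f '' closedBall c r)ᶜ := by
    rintro x hx
    by_cases hxc : x ∈ f '' closedBall c r
    · obtain ⟨z, hz, rfl⟩ := hxc
      rw [← ball_union_sphere] at hz
      refine hz.elim (fun hz => Or.inl (mem_image_of_mem f hz)) fun hz => ?_
      exact absurd (mem_ball.1 hx) (hsphere z hz).not_gt
    · exact Or.inr hxc
  refine (convex_ball (f c) R).isPreconnected.subset_left_of_subset_union hopen
    hclosed.isOpen_compl (disjoint_compl_right.mono_left (image_mono ball_subset_closedBall))
    hcover ⟨f c, mem_ball_self (pos_of_mem_ball hw), mem_image_of_mem f (mem_ball_self hr)⟩ hw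

noncomputable def harmonicDifferential (a b : ℂ) : ℂ →L[ℝ] ℂ :=
  a • ContinuousLinearMap.id ℝ ℂ
    + conjCLE.toContinuousLinearMap.comp (b • ContinuousLinearMap.id ℝ ℂ)

@[simp]
lemma harmonicDifferential_apply (a b v : ℂ) :
    harmonicDifferential a b v = a * v + conj (b * v) := rfl

lemma norm_harmonicDifferential_le (a b : ℂ) :
    ‖harmonicDifferential a b‖ ≤ ‖a‖ + ‖b‖ :=
  ContinuousLinearMap.opNorm_le_bound _ (by positivity) fun v => by
    simpa [add_mul] using norm_add_le (a * v) (conj (b * v))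

lemma sub_mul_norm_le_norm_harmonicDifferential (a b v : ℂ) :
    (‖a‖ - ‖b‖) * ‖v‖ ≤ ‖harmonicDifferential a b v‖ := by
  simpa [sub_mul] using norm_sub_norm_le (a * v) (-conj (b * v))

lemma range_harmonicDifferential {a b : ℂ} (hab : ‖b‖ < ‖a‖) :
    (harmonicDifferential a b).range = ⊤ := by
  refine LinearMap.range_eq_top.2 (LinearMap.injective_iff_surjective.1 ?_)
  rw [← LinearMap.ker_eq_bot, LinearMap.ker_eq_bot']
  intro v hv
  have := sub_mul_norm_le_norm_harmonicDifferential a b v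
  rw [ContinuousLinearMap.coe_coe] at hv
  rw [hv, norm_zero] at this
  exact norm_le_zero_iff.1 (nonpos_of_mul_nonpos_right this (sub_pos.2 hab))

lemma HasStrictDerivAt.add_conj {h g : ℂ → ℂ} {a b z : ℂ} (hh : HasStrictDerivAt h a z)
    (hg : HasStrictDerivAt g b z) :
    HasStrictFDerivAt (fun w => h w + conj (g w)) (harmonicDifferential a b) z := by
  refine ((hh.hasStrictFDerivAt.restrictScalars ℝ).add
    (conjCLE.toContinuousLinearMap.hasStrictFDerivAt.comp z
      (hg.hasStrictFDerivAt.restrictScalars ℝ))).congr_fderiv ?_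
  ext v
  simp [mul_comm]

section HarmonicMapping

variable {f h g : ℂ → ℂ} {M : ℝ}

noncomputable def harmonicRemainder (h g : ℂ → ℂ) (z : ℂ) : ℂ :=
  h z - deriv h 0 * z + conj (g z - deriv g 0 * z)

lemma hasStrictFDerivAt_harmonicRemainder (hh : DifferentiableOn ℂ h (ball 0 1))
    (hg : DifferentiableOn ℂ g (ball 0 1)) {w : ℂ} (hw : w ∈ ball 0 1) :
    HasStrictFDerivAt (harmonicRemainder h g)
      (harmonicDifferential (deriv h w - deriv h 0) (deriv g w - deriv g 0)) w := by
  have hrem := ((hh.analyticAt (isOpen_ball.mem_nhds hw)).hasStrictDerivAt.sub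
    ((hasStrictDerivAt_id w).const_mul (deriv h 0))).add_conj
    ((hg.analyticAt (isOpen_ball.mem_nhds hw)).hasStrictDerivAt.sub
      ((hasStrictDerivAt_id w).const_mul (deriv g 0)))
  rwa [mul_one, mul_one] at hrem

lemma norm_harmonicDifferential_sub_le (hh : DifferentiableOn ℂ h (ball 0 1))
    (hg : DifferentiableOn ℂ g (ball 0 1))
    (hM : ∀ w ∈ ball 0 1, ‖deriv h w‖ + ‖deriv g w‖ ≤ M) {w : ℂ} (hw : w ∈ ball 0 1) :
    ‖harmonicDifferential (deriv h w - deriv h 0) (deriv g w - deriv g 0)‖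
      ≤ M * ‖w‖ / (1 - ‖w‖) :=
  (norm_harmonicDifferential_le _ _).trans <| norm_sub_add_norm_sub_le
    (hh.analyticOnNhd isOpen_ball).deriv.differentiableOn
    (hg.analyticOnNhd isOpen_ball).deriv.differentiableOn hM hw

lemma sub_norm_harmonicRemainder_sub_le_norm_sub (hf : ∀ z ∈ ball 0 1, f z = h z + conj (g z))
    {z₁ z₂ : ℂ} (hz₁ : z₁ ∈ ball 0 1) (hz₂ : z₂ ∈ ball 0 1) :
    (‖deriv h 0‖ - ‖deriv g 0‖) * ‖z₂ - z₁‖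
        - ‖harmonicRemainder h g z₂ - harmonicRemainder h g z₁‖
      ≤ ‖f z₂ - f z₁‖ := by
  have hdecomp : f z₂ - f z₁ = harmonicDifferential (deriv h 0) (deriv g 0) (z₂ - z₁)
      + (harmonicRemainder h g z₂ - harmonicRemainder h g z₁) := by
    rw [hf z₂ hz₂, hf z₁ hz₁]
    simp only [harmonicDifferential_apply, harmonicRemainder, map_sub, map_mul]
    ring
  have := norm_sub_norm_le (harmonicDifferential (deriv h 0) (deriv g 0) (z₂ - z₁))
    (-(harmonicRemainder h g z₂ - harmonicRemainder h g z₁))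
  rw [norm_neg, sub_neg_eq_add, ← hdecomp] at this
  linarith [sub_mul_norm_le_norm_harmonicDifferential (deriv h 0) (deriv g 0) (z₂ - z₁)]

theorem injOn_ball_one_div_one_add (hf : ∀ z ∈ ball 0 1, f z = h z + conj (g z))
    (hh : DifferentiableOn ℂ h (ball 0 1)) (hg : DifferentiableOn ℂ g (ball 0 1))
    (hM : ∀ w ∈ ball 0 1, ‖deriv h w‖ + ‖deriv g w‖ ≤ M)
    (h0 : 1 ≤ ‖deriv h 0‖ - ‖deriv g 0‖) :
    InjOn f (ball 0 (1 / (1 + M))) := by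
  have hM0 : 1 ≤ M := by linarith [hM 0 (mem_ball_self one_pos), norm_nonneg (deriv g 0)]
  have hsub : ball (0 : ℂ) (1 / (1 + M)) ⊆ ball 0 1 :=
    ball_subset_ball (div_le_one_of_le₀ (by linarith) (by linarith))
  intro z₁ hz₁ z₂ hz₂ heq
  set r := max ‖z₁‖ ‖z₂‖
  have hr : r < 1 / (1 + M) := max_lt (mem_ball_zero_iff.1 hz₁) (mem_ball_zero_iff.1 hz₂)
  rw [lt_div_iff₀ (by linarith)] at hr
  have hc : M * r / (1 - r) < 1 := by rw [div_lt_one (by nlinarith)]; linarith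
  have hlip := norm_image_sub_le_of_norm_fderiv_le_mul_div (by linarith)
    (fun w hw => (hasStrictFDerivAt_harmonicRemainder hh hg hw).hasFDerivAt)
    (fun w hw => norm_harmonicDifferential_sub_le hh hg hM hw) (by nlinarith)
    (mem_closedBall_zero_iff.2 (le_max_left ‖z₁‖ ‖z₂‖))
    (mem_closedBall_zero_iff.2 (le_max_right ‖z₁‖ ‖z₂‖))
  have hlow := sub_norm_harmonicRemainder_sub_le_norm_sub hf (hsub hz₁) (hsub hz₂)
  rw [heq, sub_self, norm_zero] at hlow
  have hdist : ‖z₂ - z₁‖ = 0 := by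
    nlinarith [mul_le_mul_of_nonneg_right h0 (norm_nonneg (z₂ - z₁)), norm_nonneg (z₂ - z₁)]
  exact (sub_eq_zero.1 (norm_eq_zero.1 hdist)).symm

theorem add_mul_add_log_le_norm_sub (hf : ∀ z ∈ ball 0 1, f z = h z + conj (g z))
    (hh : DifferentiableOn ℂ h (ball 0 1)) (hg : DifferentiableOn ℂ g (ball 0 1))
    (hM : ∀ w ∈ ball 0 1, ‖deriv h w‖ + ‖deriv g w‖ ≤ M)
    (h0 : 1 ≤ ‖deriv h 0‖ - ‖deriv g 0‖) {z : ℂ} (hz : ‖z‖ < 1) :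
    ‖z‖ + M * (‖z‖ + Real.log (1 - ‖z‖)) ≤ ‖f z - f 0‖ := by
  have hlow :=
    sub_norm_harmonicRemainder_sub_le_norm_sub hf (mem_ball_self one_pos) (mem_ball_zero_iff.2 hz)
  have hrad := norm_image_sub_image_zero_le_of_norm_fderiv_le_mul_div
    (fun w hw => (hasStrictFDerivAt_harmonicRemainder hh hg hw).hasFDerivAt)
    (fun w hw => norm_harmonicDifferential_sub_le hh hg hM hw) hz
  rw [sub_zero] at hlow
  nlinarith [mul_le_mul_of_nonneg_right h0 (norm_nonneg z)]

theorem isOpen_image_of_norm_deriv_lt (hf : ∀ z ∈ ball 0 1, f z = h z + conj (g z))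
    (hh : DifferentiableOn ℂ h (ball 0 1)) (hg : DifferentiableOn ℂ g (ball 0 1))
    (hsp : ∀ z ∈ ball 0 1, ‖deriv g z‖ < ‖deriv h z‖) {U : Set ℂ} (hU : IsOpen U)
    (hU1 : U ⊆ ball 0 1) : IsOpen (f '' U) := by
  rw [isOpen_iff_mem_nhds]
  rintro _ ⟨z, hz, rfl⟩
  have hfz : HasStrictFDerivAt f (harmonicDifferential (deriv h z) (deriv g z)) z :=
    ((hh.analyticAt (isOpen_ball.mem_nhds (hU1 hz))).hasStrictDerivAt.add_conj
      (hg.analyticAt (isOpen_ball.mem_nhds (hU1 hz))).hasStrictDerivAt).congr_of_eventuallyEq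
      (eventuallyEq_of_mem (isOpen_ball.mem_nhds (hU1 hz)) hf).symm
  rw [← hfz.map_nhds_eq_of_surj (range_harmonicDifferential (hsp z (hU1 hz)))]
  exact image_mem_map (hU.mem_nhds hz)

end HarmonicMapping

/-- Landau-type theorem for K-quasiregular harmonic mappings with λ_f(0) = 1:
f is injective on 𝔻_{ρ₁}, ρ₁ = 1/(1 + Kλ), and f(𝔻_{ρ₁}) contains the disc of
radius R₁ = ρ₁ + Kλ(ρ₁ + ln(Kλρ₁)). -/
theorem landau_quasiregular
    (K lam : ℝ) (hK : 1 ≤ K) (hlam : 0 < lam)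
    (h g f : ℂ → ℂ)
    (hf : ∀ z ∈ ball (0:ℂ) 1, f z = h z + (starRingEnd ℂ) (g z))
    (hh : DifferentiableOn ℂ h (ball (0:ℂ) 1))
    (hg : DifferentiableOn ℂ g (ball (0:ℂ) 1))
    (hsp : ∀ z ∈ ball (0:ℂ) 1,
      0 < ‖deriv h z‖ ^ 2 - ‖deriv g z‖ ^ 2)
    (hqr : ∀ z ∈ ball (0:ℂ) 1,
      ‖deriv h z‖ + ‖deriv g z‖
        ≤ K * |‖deriv h z‖ - ‖deriv g z‖|)
    (hf0 : f 0 = 0)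
    (hlam0 : |‖deriv h 0‖ - ‖deriv g 0‖| = 1)
    (hlamf : ∀ z ∈ ball (0:ℂ) 1,
      |‖deriv h z‖ - ‖deriv g z‖| ≤ lam) :
    Set.InjOn f (ball (0:ℂ) (1 / (1 + K * lam))) ∧
      ball (0:ℂ)
          (1 / (1 + K * lam)
            + K * lam * (1 / (1 + K * lam) + Real.log (K * lam * (1 / (1 + K * lam)))))
        ⊆ f '' ball (0:ℂ) (1 / (1 + K * lam)) := by
  have hsp' : ∀ z ∈ ball (0 : ℂ) 1, ‖deriv g z‖ < ‖deriv h z‖ := fun z hz =>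
    (sq_lt_sq₀ (norm_nonneg _) (norm_nonneg _)).1 (sub_pos.1 (hsp z hz))
  have hM : ∀ z ∈ ball (0 : ℂ) 1, ‖deriv h z‖ + ‖deriv g z‖ ≤ K * lam := fun z hz =>
    (hqr z hz).trans (mul_le_mul_of_nonneg_left (hlamf z hz) (by linarith))
  have h0 : 1 ≤ ‖deriv h 0‖ - ‖deriv g 0‖ := by
    rw [abs_of_pos (sub_pos.2 (hsp' 0 (mem_ball_self one_pos)))] at hlam0
    exact hlam0.ge
  have hKlam : 0 < K * lam := mul_pos (by linarith) hlam
  have hρ₁ : 0 < 1 / (1 + K * lam) := one_div_pos.2 (by linarith)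
  have hρ₁1 : 1 / (1 + K * lam) < 1 := by rw [div_lt_one (by linarith)]; linarith
  have hlog : K * lam * (1 / (1 + K * lam)) = 1 - 1 / (1 + K * lam) := by field_simp; ring
  have hcont : ContinuousOn f (closedBall 0 (1 / (1 + K * lam))) :=
    ((hh.continuousOn.add (continuous_conj.comp_continuousOn hg.continuousOn)).congr hf).mono
      (closedBall_subset_ball hρ₁1)
  refine ⟨injOn_ball_one_div_one_add hf hh hg hM h0, ?_⟩
  rw [hlog]
  conv_lhs => rw [← hf0]
  refine ball_subset_image_ball_of_le_dist_sphere hρ₁ hcont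
    (isOpen_image_of_norm_deriv_lt hf hh hg hsp' isOpen_ball (ball_subset_ball hρ₁1.le))
    fun z hz => ?_
  rw [mem_sphere_zero_iff_norm] at hz
  rw [dist_eq_norm, ← hz]
  exact add_mul_add_log_le_norm_sub hf hh hg hM h0 (hz ▸ hρ₁1)
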